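/- arXiv:2407.20464 — 3 statements merged into one kernel-verified Lean document; each statement's English description precedes it below -/
import Mathlib

section
/- Let f ∈ ℚ[X] be a polynomial of degree d ≥ 1. Then there is a constant C > 0 depending only on f such that for all n ≥ 1 one has h(Res(f^(n), f')) ≤ C · d^n, where h is the Weil logarithmic height of the rational number Res(f^(n), f'). -/
open Polynomial

/-- The `n`-th iterate of a polynomial: `f^(0) = X`, `f^(n) = f(f^(n-1))`. -/
noncomputable def polyIter {R : Type*} [CommSemiring R] (f : R[X]) : ℕ → R[X]
  | 0 => X
  | n + 1 => f.comp (polyIter f n)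

/-- The Sylvester matrix of `f` and `g` (with respect to their natural degrees
`m = deg f`, `n = deg g`): the `(m+n) × (m+n)` matrix whose first `n` rows carry the
(shifted) coefficients of `f` in descending order and whose last `m` rows carry the
(shifted) coefficients of `g`. -/
noncomputable def sylvesterMatrix {R : Type*} [CommRing R] (f g : R[X]) :
    Matrix (Fin (f.natDegree + g.natDegree)) (Fin (f.natDegree + g.natDegree)) R :=
  Matrix.of fun i j =>
    if (i : ℕ) < g.natDegree then
      if (i : ℕ) ≤ (j : ℕ) ∧ (j : ℕ) ≤ (i : ℕ) + f.natDegree then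
        f.coeff (f.natDegree + (i : ℕ) - (j : ℕ))
      else 0
    else
      if (i : ℕ) - g.natDegree ≤ (j : ℕ) ∧ (j : ℕ) ≤ (i : ℕ) - g.natDegree + g.natDegree then
        g.coeff (g.natDegree + ((i : ℕ) - g.natDegree) - (j : ℕ))
      else 0

/-- The resultant `Res(f, g)` of two polynomials, as the determinant of their
Sylvester matrix; so `Res(f, g) = f_m^{deg g} ∏ g(αᵢ)` over the roots `αᵢ` of `f`. -/
noncomputable def resultant {R : Type*} [CommRing R] (f g : R[X]) : R :=
  (sylvesterMatrix f g).det

/-- The Weil logarithmic height of a rational number `a/b` in lowest terms: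
`h(a/b) = max (log |a|) (log |b|)`, with `h(0) = 0` (note `Real.log 0 = 0`). -/
noncomputable def ratHeight (r : ℚ) : ℝ :=
  max (Real.log |(r.num : ℝ)|) (Real.log (r.den : ℝ))

/-!
Write `F = f^(n)`, of degree `d^n`, and `G = f'`, of degree `e ≤ d - 1`, and let `‖·‖₁` be
the sum of the absolute values of the coefficients. Bounding the Sylvester determinant by the
product of its row sums gives `|Res(F, G)| ≤ ‖F‖₁^e ‖G‖₁^(d^n)`, and submultiplicativity of
`‖·‖₁` gives `‖F‖₁ ≤ max(1, ‖f‖₁)^m` with `m = 1 + d + ⋯ + d^(n-1)`. For the denominator: if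
`b f` has integer coefficients then so does `b^m F`, so scaling the rows of the Sylvester matrix
shows that `b^(e m + d^n) Res(F, G)` is an integer. Since `e m ≤ (d - 1) m < d^n`, every exponent
is `O(d^n)`.
-/

open Finset

theorem Fin.prod_ite_val_lt {M : Type*} [CommMonoid M] (a e : ℕ) (x y : M) :
    ∏ i : Fin (a + e), (if (i : ℕ) < e then x else y) = x ^ e * y ^ a := by
  have hcard := card_filter_add_card_filter_not (s := (univ : Finset (Fin (a + e))))
    (fun i => (i : ℕ) < e)
  rw [card_filter_val_lt, card_univ, Fintype.card_fin] at hcard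
  rw [prod_ite, Finset.prod_const, Finset.prod_const, card_filter_val_lt]
  congr 2 <;> omega

theorem Nat.sub_one_mul_geom_sum_le_pow (d n : ℕ) :
    (d - 1) * ∑ k ∈ range n, d ^ k ≤ d ^ n := by
  rcases d with _ | d
  · simp
  · rw [Nat.add_sub_cancel, ← geom_sum_mul_add d n, mul_comm]
    exact Nat.le_succ _

namespace Matrix

theorem norm_det_le_prod_sum_norm {n R : Type*} [Fintype n] [DecidableEq n]
    [NormedCommRing R] [NormOneClass R] (M : Matrix n n R) :
    ‖M.det‖ ≤ ∏ i, ∑ j, ‖M i j‖ := by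
  rw [← M.det_transpose, det_apply, prod_univ_sum]
  calc ‖∑ σ : Equiv.Perm n, Equiv.Perm.sign σ • ∏ i, M.transpose (σ i) i‖
      ≤ ∑ σ : Equiv.Perm n, ∏ i, ‖M i (σ i)‖ := by
        refine (norm_sum_le _ _).trans (sum_le_sum fun σ _ => ?_)
        rcases Int.units_eq_one_or (Equiv.Perm.sign σ) with h | h <;>
          simpa [h] using Finset.norm_prod_le _ _
    _ = ∑ x ∈ univ.map ⟨_, DFunLike.coe_injective (F := Equiv.Perm n)⟩,
          ∏ i, ‖M i (x i)‖ := by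
        rw [sum_map]; rfl
    _ ≤ ∑ x : n → n, ∏ i, ‖M i (x i)‖ :=
        sum_le_univ_sum_of_nonneg fun x => by positivity
    _ = ∑ x ∈ Fintype.piFinset fun _ => univ, ∏ i, ‖M i (x i)‖ := by simp

theorem prod_mul_det_mem_range {n R K : Type*} [Fintype n] [DecidableEq n]
    [CommRing R] [CommRing K] (φ : R →+* K) (M : Matrix n n K) (c : n → K)
    (h : ∀ i j, c i * M i j ∈ Set.range φ) : (∏ i, c i) * M.det ∈ Set.range φ := by
  choose N hN using h
  refine ⟨(of N).det, ?_⟩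
  rw [RingHom.map_det, ← det_mul_column]
  congr 1
  ext i j
  exact hN i j

end Matrix

namespace Polynomial

section L1Norm

variable {A : Type*} [SeminormedRing A]

noncomputable def l1Norm (p : A[X]) : ℝ := p.sum fun _ a => ‖a‖

theorem l1Norm_eq_sum_range {p : A[X]} {n : ℕ} (hn : p.natDegree < n) :
    l1Norm p = ∑ i ∈ range n, ‖p.coeff i‖ :=
  p.sum_over_range' (fun _ => norm_zero) n hn

theorem l1Norm_nonneg (p : A[X]) : 0 ≤ l1Norm p :=
  sum_nonneg fun _ _ => norm_nonneg _

@[simp]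
theorem l1Norm_monomial (n : ℕ) (a : A) : l1Norm (monomial n a) = ‖a‖ :=
  sum_monomial_index _ _ norm_zero

@[simp]
theorem l1Norm_C (a : A) : l1Norm (C a) = ‖a‖ := l1Norm_monomial 0 a

@[simp]
theorem l1Norm_zero : l1Norm (0 : A[X]) = 0 := sum_zero_index _

theorem l1Norm_add_le (p q : A[X]) : l1Norm (p + q) ≤ l1Norm p + l1Norm q := by
  have hp : p.natDegree < max p.natDegree q.natDegree + 1 := by omega
  have hq : q.natDegree < max p.natDegree q.natDegree + 1 := by omega
  rw [l1Norm_eq_sum_range hp, l1Norm_eq_sum_range hq,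
    l1Norm_eq_sum_range ((natDegree_add_le p q).trans_lt (max_lt hp hq)), ← sum_add_distrib]
  exact sum_le_sum fun i _ => (coeff_add p q i).symm ▸ norm_add_le _ _

theorem l1Norm_sum_le {ι : Type*} (s : Finset ι) (p : ι → A[X]) :
    l1Norm (∑ i ∈ s, p i) ≤ ∑ i ∈ s, l1Norm (p i) :=
  le_sum_of_subadditive l1Norm l1Norm_zero.le l1Norm_add_le s p

theorem l1Norm_mul_le (p q : A[X]) : l1Norm (p * q) ≤ l1Norm p * l1Norm q := by
  rw [mul_eq_sum_sum, show l1Norm p = ∑ i ∈ p.support, ‖p.coeff i‖ from rfl, sum_mul]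
  refine (l1Norm_sum_le _ _).trans (sum_le_sum fun i _ => ?_)
  rw [show l1Norm q = ∑ j ∈ q.support, ‖q.coeff j‖ from rfl, mul_sum]
  refine (l1Norm_sum_le _ _).trans (sum_le_sum fun j _ => ?_)
  rw [l1Norm_monomial]
  exact norm_mul_le _ _

theorem sum_norm_coeff_reflect_le_l1Norm (p : A[X]) (c N : ℕ) :
    ∑ j : Fin N, (if c ≤ (j : ℕ) ∧ (j : ℕ) ≤ c + p.natDegree then
      ‖p.coeff (p.natDegree + c - j)‖ else 0) ≤ l1Norm p := by
  set W := univ.filter fun j : Fin N => c ≤ (j : ℕ) ∧ (j : ℕ) ≤ c + p.natDegree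
  have hinj : Set.InjOn (fun j : Fin N => p.natDegree + c - j) W := by
    intro j₁ h₁ j₂ h₂ h
    simp only [W, mem_coe, mem_filter, mem_univ, true_and] at h₁ h₂
    exact Fin.ext (by simp only at h; omega)
  rw [← sum_filter, ← sum_image (f := fun k => ‖p.coeff k‖) hinj,
    l1Norm_eq_sum_range (Nat.lt_succ_self _)]
  refine sum_le_sum_of_subset_of_nonneg (fun k hk => ?_) fun _ _ _ => norm_nonneg _
  obtain ⟨j, hj, rfl⟩ := mem_image.1 hk
  simp only [W, mem_filter, mem_univ, true_and] at hj
  exact mem_range.2 (by omega)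

variable [NormOneClass A]

@[simp]
theorem l1Norm_X : l1Norm (X : A[X]) = 1 := by
  rw [← monomial_one_one_eq_X, l1Norm_monomial, norm_one]

theorem l1Norm_pow_le (p : A[X]) (n : ℕ) : l1Norm (p ^ n) ≤ max 1 (l1Norm p) ^ n := by
  induction n with
  | zero => simp only [pow_zero, ← C_1, l1Norm_C, norm_one, le_refl]
  | succ n ih =>
    rw [pow_succ, pow_succ]
    exact (l1Norm_mul_le _ _).trans
      (mul_le_mul ih (le_max_right _ _) (l1Norm_nonneg _) (by positivity))

theorem l1Norm_comp_le (p q : A[X]) :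
    l1Norm (p.comp q) ≤ l1Norm p * max 1 (l1Norm q) ^ p.natDegree := by
  rw [comp_eq_sum_left, show l1Norm p = ∑ i ∈ p.support, ‖p.coeff i‖ from rfl, sum_mul]
  refine (l1Norm_sum_le _ _).trans (sum_le_sum fun i hi => ?_)
  calc l1Norm (C (p.coeff i) * q ^ i) ≤ ‖p.coeff i‖ * l1Norm (q ^ i) :=
        (l1Norm_mul_le _ _).trans_eq (by rw [l1Norm_C])
    _ ≤ ‖p.coeff i‖ * max 1 (l1Norm q) ^ p.natDegree := by
        gcongr
        exact (l1Norm_pow_le q i).trans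
          (pow_le_pow_right₀ (le_max_left _ _) (le_natDegree_of_mem_supp i hi))

end L1Norm

theorem natDegree_polyIter {R : Type*} [CommSemiring R] [NoZeroDivisors R] [Nontrivial R]
    (f : R[X]) (n : ℕ) : (polyIter f n).natDegree = f.natDegree ^ n := by
  induction n with
  | zero => simp [polyIter]
  | succ n ih => rw [polyIter, natDegree_comp, ih, pow_succ']

theorem max_one_l1Norm_polyIter_le {A : Type*} [SeminormedCommRing A] [NormOneClass A]
    (f : A[X]) (n : ℕ) :
    max 1 (l1Norm (polyIter f n)) ≤ max 1 (l1Norm f) ^ ∑ k ∈ range n, f.natDegree ^ k := by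
  induction n with
  | zero => simp [polyIter]
  | succ n ih =>
    have hf : 1 ≤ max 1 (l1Norm f) := le_max_left _ _
    rw [geom_sum_succ, pow_succ, pow_mul']
    refine max_le (one_le_mul_of_one_le_of_one_le (one_le_pow₀ (one_le_pow₀ hf)) hf) ?_
    calc l1Norm (polyIter f (n + 1))
        ≤ l1Norm f * max 1 (l1Norm (polyIter f n)) ^ f.natDegree := l1Norm_comp_le _ _
      _ ≤ max 1 (l1Norm f) *
            (max 1 (l1Norm f) ^ ∑ k ∈ range n, f.natDegree ^ k) ^ f.natDegree := by
          gcongr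
          exact le_max_right _ _
      _ = _ := mul_comm _ _

theorem comp_mem_lifts {R S : Type*} [CommSemiring R] [CommSemiring S] {φ : R →+* S}
    {p q : S[X]} (hp : p ∈ lifts φ) (hq : q ∈ lifts φ) : p.comp q ∈ lifts φ := by
  obtain ⟨p', rfl⟩ := (mem_lifts p).1 hp
  obtain ⟨q', rfl⟩ := (mem_lifts q).1 hq
  exact (mem_lifts _).2 ⟨p'.comp q', Polynomial.map_comp φ p' q'⟩

theorem scaleRoots_mem_lifts {R S : Type*} [CommSemiring R] [CommSemiring S] {φ : R →+* S}
    {p : S[X]} {s : S} (hp : p ∈ lifts φ) (hs : s ∈ Set.range φ) :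
    p.scaleRoots s ∈ lifts φ := by
  rw [lifts_iff_coeff_lifts] at hp ⊢
  intro i
  obtain ⟨a, ha⟩ := hp i
  obtain ⟨t, rfl⟩ := hs
  exact ⟨a * t ^ (p.natDegree - i), by rw [coeff_scaleRoots, map_mul, map_pow, ha]⟩

theorem C_pow_geom_sum_mul_polyIter_mem_lifts {R K : Type*} [CommRing R] [Field K]
    {φ : R →+* K} {f : K[X]} {b : R} (hb : φ b ≠ 0) (hf : C (φ b) * f ∈ lifts φ)
    (n : ℕ) :
    C (φ b ^ ∑ k ∈ range n, f.natDegree ^ k) * polyIter f n ∈ lifts φ := by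
  induction n with
  | zero => simpa [polyIter] using X_mem_lifts φ
  | succ n ih =>
    set s := φ b ^ ∑ k ∈ range n, f.natDegree ^ k
    have hdeg : (C (φ b) * f).natDegree = f.natDegree := natDegree_C_mul hb
    -- `b ^ m(n+1) f(F) = (scaleRoots (b f) s)(s F)`: a composition of two lifted polynomials
    have key : (scaleRoots (C (φ b) * f) s).comp (C s * polyIter f n)
        = C (φ b ^ ∑ k ∈ range (n + 1), f.natDegree ^ k) * polyIter f (n + 1) := by
      rw [comp, scaleRoots_eval₂_mul, hdeg, ← comp, mul_comp, C_comp, geom_sum_succ, pow_succ,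
        pow_mul']
      simp only [polyIter, s, C_mul, C_pow, ← pow_mul]
      ring
    rw [← key]
    exact comp_mem_lifts (scaleRoots_mem_lifts hf ⟨_, map_pow φ b _⟩) ih

theorem sum_norm_sylvesterMatrix_le {A : Type*} [NormedCommRing A] (f g : A[X])
    (i : Fin (f.natDegree + g.natDegree)) :
    ∑ j, ‖sylvesterMatrix f g i j‖ ≤
      if (i : ℕ) < g.natDegree then l1Norm f else l1Norm g := by
  split_ifs with hi
  · refine le_of_eq_of_le (sum_congr rfl fun j _ => ?_) (sum_norm_coeff_reflect_le_l1Norm f i _)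
    simp only [sylvesterMatrix, Matrix.of_apply, if_pos hi]
    split_ifs <;> simp
  · refine le_of_eq_of_le (sum_congr rfl fun j _ => ?_)
      (sum_norm_coeff_reflect_le_l1Norm g (i - g.natDegree) _)
    simp only [sylvesterMatrix, Matrix.of_apply, if_neg hi]
    split_ifs <;> simp

theorem norm_resultant_le {A : Type*} [NormedCommRing A] [NormOneClass A] (f g : A[X]) :
    ‖_root_.resultant f g‖ ≤ l1Norm f ^ g.natDegree * l1Norm g ^ f.natDegree := by
  rw [← Fin.prod_ite_val_lt]
  exact (Matrix.norm_det_le_prod_sum_norm _).trans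
    (prod_le_prod (fun _ _ => sum_nonneg fun _ _ => norm_nonneg _)
      fun i _ => sum_norm_sylvesterMatrix_le f g i)

theorem resultant_mul_mem_range {R K : Type*} [CommRing R] [CommRing K] (φ : R →+* K)
    {f g : K[X]} {u v : K} (hf : C u * f ∈ lifts φ) (hg : C v * g ∈ lifts φ) :
    u ^ g.natDegree * v ^ f.natDegree * _root_.resultant f g ∈ Set.range φ := by
  rw [lifts_iff_coeff_lifts] at hf hg
  rw [← Fin.prod_ite_val_lt, _root_.resultant]
  refine Matrix.prod_mul_det_mem_range φ _ _ fun i j => ?_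
  simp only [sylvesterMatrix, Matrix.of_apply]
  split_ifs
  · simpa only [coeff_C_mul] using hf _
  · exact ⟨0, by simp⟩
  · simpa only [coeff_C_mul] using hg _
  · exact ⟨0, by simp⟩

end Polynomial

theorem ratHeight_le_log_add_log {r : ℚ} {B z : ℤ} {P : ℝ} (hB : B ≠ 0) (hz : r * B = z)
    (hr : ‖r‖ ≤ P) (hP : 1 ≤ P) : ratHeight r ≤ Real.log P + Real.log |(B : ℝ)| := by
  have hB1 : (1 : ℝ) ≤ |(B : ℝ)| := by exact_mod_cast Int.one_le_abs hB
  have hden : (r.den : ℝ) ≤ |(B : ℝ)| := by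
    have hdvd : (r.den : ℤ) ∣ B := by
      rw [eq_div_of_mul_eq (Int.cast_ne_zero.2 hB) hz, ← Rat.divInt_eq_div]
      exact Rat.den_dvd z B
    exact_mod_cast Int.le_of_dvd (abs_pos.2 hB) ((dvd_abs _ _).2 hdvd)
  have hnum : |(r.num : ℝ)| = ‖r‖ * r.den := by
    rw [← Rat.norm_cast_real, Real.norm_eq_abs, ← Nat.abs_cast, ← abs_mul]
    exact_mod_cast congrArg abs (Rat.mul_den_eq_num r).symm
  have log_le {x : ℝ} (hx : 0 ≤ x) (hxP : x ≤ P * |(B : ℝ)|) :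
      Real.log x ≤ Real.log P + Real.log |(B : ℝ)| := by
    rw [← Real.log_mul (by positivity) (by positivity)]
    rcases hx.eq_or_lt with rfl | hx
    · rw [Real.log_zero]
      exact Real.log_nonneg (one_le_mul_of_one_le_of_one_le hP hB1)
    · exact Real.log_le_log hx hxP
  refine max_le (log_le (abs_nonneg _) ?_) (log_le (Nat.cast_nonneg _) ?_)
  · rw [hnum]
    exact mul_le_mul hr hden (Nat.cast_nonneg _) (by positivity)
  · exact hden.trans (le_mul_of_one_le_left (abs_nonneg _) hP)

theorem exists_int_mul_mem_lifts (f : ℚ[X]) :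
    ∃ b : ℤ, b ≠ 0 ∧ C (b : ℚ) * f ∈ lifts (Int.castRingHom ℚ) := by
  obtain ⟨b, hb, hbf⟩ := IsLocalization.integerNormalization_spec (nonZeroDivisors ℤ) f
  refine ⟨b, nonZeroDivisors.ne_zero hb, ?_⟩
  rw [← smul_eq_C_mul, Int.cast_smul_eq_zsmul, ← hbf]
  exact (mem_lifts _).2 ⟨_, rfl⟩

theorem ratHeight_resultant_polyIter_le {f : ℚ[X]} {b : ℤ} (hb : b ≠ 0)
    (hf : C (b : ℚ) * f ∈ lifts (Int.castRingHom ℚ)) (n : ℕ) :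
    ratHeight (_root_.resultant (polyIter f n) (derivative f)) ≤
      ((derivative f).natDegree * ∑ k ∈ range n, f.natDegree ^ k : ℕ) *
          (Real.log (max 1 (l1Norm f)) + Real.log |(b : ℝ)|) +
        (f.natDegree ^ n : ℕ) *
          (Real.log (max 1 (l1Norm (derivative f))) + Real.log |(b : ℝ)|) := by
  set e := (derivative f).natDegree
  set m := ∑ k ∈ range n, f.natDegree ^ k
  have hf' : C (b : ℚ) * derivative f ∈ lifts (Int.castRingHom ℚ) := by
    obtain ⟨q, hq⟩ := (mem_lifts _).1 hf
    exact (mem_lifts _).2 ⟨derivative q, by rw [← derivative_map, hq, derivative_C_mul]⟩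
  obtain ⟨z, hz⟩ := resultant_mul_mem_range _
    (C_pow_geom_sum_mul_polyIter_mem_lifts (Int.cast_ne_zero.2 hb) hf n) hf'
  have hres : ‖_root_.resultant (polyIter f n) (derivative f)‖
      ≤ max 1 (l1Norm f) ^ (e * m) * max 1 (l1Norm (derivative f)) ^ f.natDegree ^ n := by
    refine (norm_resultant_le _ _).trans ?_
    rw [natDegree_polyIter, mul_comm e, pow_mul]
    have hF : l1Norm (polyIter f n) ≤ max 1 (l1Norm f) ^ m :=
      (le_max_right _ _).trans (max_one_l1Norm_polyIter_le f n)
    exact mul_le_mul (pow_le_pow_left₀ (l1Norm_nonneg _) hF e)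
      (pow_le_pow_left₀ (l1Norm_nonneg _) (le_max_right _ _) _)
      (pow_nonneg (l1Norm_nonneg _) _) (by positivity)
  have hz' : _root_.resultant (polyIter f n) (derivative f) * (b ^ (e * m + f.natDegree ^ n) : ℤ)
      = z := by
    simp only [eq_intCast, natDegree_polyIter] at hz
    rw [hz]
    push_cast
    ring
  refine (ratHeight_le_log_add_log (pow_ne_zero _ hb) hz' hres (one_le_mul_of_one_le_of_one_le
    (one_le_pow₀ (le_max_left _ _)) (one_le_pow₀ (le_max_left _ _)))).trans_eq ?_
  rw [Real.log_mul (by positivity) (by positivity), Int.cast_pow, abs_pow, Real.log_pow,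
    Real.log_pow, Real.log_pow]
  push_cast
  ring

theorem height_resultant_iterate_general (f : ℚ[X]) :
    ∃ C : ℝ, 0 < C ∧ ∀ n : ℕ, 1 ≤ n →
      ratHeight (_root_.resultant (polyIter f n) (derivative f)) ≤ C * (f.natDegree : ℝ) ^ n := by
  obtain ⟨b, hb, hf⟩ := exists_int_mul_mem_lifts f
  set a := Real.log (max 1 (l1Norm f)) with ha_def
  set a' := Real.log (max 1 (l1Norm (derivative f))) with ha'_def
  set β := Real.log |(b : ℝ)| with hβ_def
  have ha : 0 ≤ a := Real.log_nonneg (le_max_left _ _)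
  have ha' : 0 ≤ a' := Real.log_nonneg (le_max_left _ _)
  have hβ : 0 ≤ β := Real.log_nonneg (by exact_mod_cast Int.one_le_abs hb)
  refine ⟨a + a' + 2 * β + 1, by positivity, fun n _ => ?_⟩
  have hem : (((derivative f).natDegree * ∑ k ∈ range n, f.natDegree ^ k : ℕ) : ℝ)
      ≤ (f.natDegree : ℝ) ^ n := by
    exact_mod_cast (Nat.mul_le_mul_right _ (natDegree_derivative_le f)).trans
      (Nat.sub_one_mul_geom_sum_le_pow _ n)
  have hheight := ratHeight_resultant_polyIter_le hb hf n
  rw [← ha_def, ← ha'_def, ← hβ_def] at hheight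
  push_cast at hheight hem ⊢
  nlinarith [mul_le_mul_of_nonneg_right hem (add_nonneg ha hβ),
    pow_nonneg (Nat.cast_nonneg (α := ℝ) f.natDegree) n]

/-- The height of `Res(f^(n), f')` grows at most like `d^n`. -/
theorem height_resultant_iterate (f : ℚ[X]) (hdeg : 1 ≤ f.natDegree) :
    ∃ C : ℝ, 0 < C ∧ ∀ n : ℕ, 1 ≤ n →
      ratHeight (_root_.resultant (polyIter f n) (derivative f)) ≤ C * (f.natDegree : ℝ) ^ n :=
  height_resultant_iterate_general f
end

section
/- Let f(X) = f_d X^d + f_{d-1} X^{d-1} + f_0 ∈ ℚ[X] with d ≥ 2 and f_d, f_{d-1} ≠ 0, and set γ = -(d-1)f_{d-1}/(d f_d). Then for all integers m, n ≥ 1, Res(f^(m) · f^(n), f') = (-1)^{(d-1)(d^m + d^n)} · (d f_d)^{d^m + d^n} · (f^(m)(0) · f^(n)(0))^{d-2} · f^(m)(γ) · f^(n)(γ). -/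
/-! Here `f' = d f_d X^{d-2} (X - γ)`. The resultant is multiplicative in its second argument, so
`Res(P, f')` splits as `(d f_d)^{deg P} Res(P, X)^{d-2} Res(P, X - γ)`, that is, up to sign,
`(d f_d)^{deg P} P(0)^{d-2} P(γ)`, and `P = f^(m) f^(n)` has degree `d^m + d^n`. -/

open Polynomial

theorem sylvesterMatrix_eq_submatrix_transpose_sylvester {R : Type*} [CommRing R] (f g : R[X]) :
    sylvesterMatrix f g =
      (sylvester f g f.natDegree g.natDegree).transpose.submatrix Fin.revPerm Fin.revPerm := by
  ext i j
  have hj := Fin.val_rev j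
  simp only [sylvesterMatrix, sylvester, Matrix.submatrix_apply, Matrix.transpose_apply,
    Fin.revPerm_apply, Matrix.of_apply, Set.mem_Icc]
  induction h : i.rev using Fin.addCases with
  | left k =>
    have := congrArg Fin.val h
    simp only [Fin.val_rev, Fin.val_castAdd] at this
    rw [Fin.addCases_left, if_neg (by omega)]
    split_ifs <;> first | rfl | omega | (congr 1; omega)
  | right k =>
    have := congrArg Fin.val h
    simp only [Fin.val_rev, Fin.val_natAdd] at this
    rw [Fin.addCases_right, if_pos (by omega)]
    split_ifs <;> first | rfl | omega | (congr 1; omega)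

theorem resultant_eq_polynomial_resultant {R : Type*} [CommRing R] (f g : R[X]) :
    _root_.resultant f g = f.resultant g := by
  rw [_root_.resultant, sylvesterMatrix_eq_submatrix_transpose_sylvester,
    Matrix.det_submatrix_equiv_self Fin.revPerm, Matrix.det_transpose, Polynomial.resultant]

theorem natDegree_polyIter {R : Type*} [CommSemiring R] [NoZeroDivisors R] [Nontrivial R]
    {f : R[X]} {d : ℕ} (hf : f.natDegree = d) (k : ℕ) : (polyIter f k).natDegree = d ^ k := by
  induction k with
  | zero => simp [polyIter]
  | succ k ih => rw [polyIter, natDegree_comp, hf, ih, pow_succ']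

namespace Polynomial

theorem resultant_C_mul_X_pow_mul_X_sub_C {R : Type*} [CommRing R] [Nontrivial R] (f : R[X])
    (a r : R) (m k : ℕ) (hm : f.natDegree ≤ m) :
    f.resultant (C a * (X ^ k * (X - C r))) m (k + 1) =
      (-1) ^ (m * (k + 1)) * a ^ m * f.coeff 0 ^ k * f.eval r := by
  have hmul := resultant_mul_right f (X ^ k) (X - C r) m hm
  rw [natDegree_X_pow, natDegree_X_sub_C] at hmul
  rw [resultant_C_mul_right, hmul, resultant_X_pow_right f m k hm,
    resultant_X_sub_C_right f m r hm]
  ring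

theorem natDegree_trinomial {R : Type*} [Semiring R] {d : ℕ} {a b c : R} (hd : 1 ≤ d)
    (ha : a ≠ 0) : (C a * X ^ d + C b * X ^ (d - 1) + C c).natDegree = d := by
  compute_degree!
  simp [show d ≠ d - 1 by omega, show d ≠ 0 by omega, ha]

theorem derivative_trinomial {K : Type*} [Field K] [CharZero K] {d : ℕ} {a b c : K} (hd : 2 ≤ d)
    (ha : a ≠ 0) :
    derivative (C a * X ^ d + C b * X ^ (d - 1) + C c) =
      C (d * a) * (X ^ (d - 2) * (X - C (-((d - 1) * b) / (d * a)))) := by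
  obtain ⟨k, rfl⟩ := Nat.exists_eq_add_of_le' hd
  set u : K := ((k + 2 : ℕ) : K) * a
  set γ : K := -((((k + 2 : ℕ) : K) - 1) * b) / u
  have hγ : u * γ = -(((k + 1 : ℕ) : K) * b) := by
    rw [mul_div_cancel₀ _ (mul_ne_zero (Nat.cast_ne_zero.mpr (by omega)) ha)]
    push_cast
    ring
  have hfactor : C u * (X ^ k * (X - C γ)) = C u * X ^ (k + 1) - C (u * γ) * X ^ k := by
    rw [C_mul (a := u) (b := γ)]
    ring
  simp only [derivative_add, derivative_C_mul_X_pow, derivative_C,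
    show k + 2 - 1 = k + 1 by omega, Nat.add_sub_cancel]
  rw [hfactor, hγ]
  simp only [u, C_neg, C_mul]
  push_cast
  ring

end Polynomial

theorem resultant_product_iterates_general (f : ℚ[X]) (d : ℕ) (fd fd1 f0 : ℚ)
    (hd : 2 ≤ d) (hfd : fd ≠ 0)
    (hf : f = C fd * X ^ d + C fd1 * X ^ (d - 1) + C f0) :
    ∀ m n : ℕ, 1 ≤ m → 1 ≤ n →
      _root_.resultant (polyIter f m * polyIter f n) (derivative f) =
        (-1 : ℚ) ^ ((d - 1) * (d ^ m + d ^ n)) * ((d : ℚ) * fd) ^ (d ^ m + d ^ n) *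
          ((polyIter f m).eval 0 * (polyIter f n).eval 0) ^ (d - 2) *
          (polyIter f m).eval (-(((d : ℚ) - 1) * fd1) / ((d : ℚ) * fd)) *
          (polyIter f n).eval (-(((d : ℚ) - 1) * fd1) / ((d : ℚ) * fd)) := by
  intro m n _ _
  have hiter (k : ℕ) : (polyIter f k).natDegree = d ^ k :=
    natDegree_polyIter (hf ▸ natDegree_trinomial (by omega) hfd) k
  have hiter_ne (k : ℕ) : polyIter f k ≠ 0 :=
    ne_zero_of_natDegree_gt (n := 0) (by rw [hiter]; positivity)
  have hprod : (polyIter f m * polyIter f n).natDegree = d ^ m + d ^ n := by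
    rw [natDegree_mul (hiter_ne m) (hiter_ne n), hiter, hiter]
  have hder := hf ▸ derivative_trinomial (b := fd1) (c := f0) hd hfd
  have hder_deg : (derivative f).natDegree = d - 2 + 1 := by
    rw [hder, natDegree_C_mul (mul_ne_zero (by positivity) hfd),
      natDegree_mul (pow_ne_zero _ X_ne_zero) (X_sub_C_ne_zero _), natDegree_X_pow,
      natDegree_X_sub_C]
  rw [resultant_eq_polynomial_resultant, hder_deg, hder, hprod,
    resultant_C_mul_X_pow_mul_X_sub_C _ _ _ _ _ hprod.le, coeff_zero_eq_eval_zero, eval_mul,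
    eval_mul, show d - 2 + 1 = d - 1 by omega]
  ring

/-- Resultant identity for trinomial-type polynomials
`f = f_d X^d + f_{d-1} X^{d-1} + f_0`, with `γ = -(d-1)f_{d-1}/(d f_d)` the unique
nonzero critical point. -/
theorem resultant_product_iterates (f : ℚ[X]) (d : ℕ) (fd fd1 f0 : ℚ)
    (hd : 2 ≤ d) (hfd : fd ≠ 0) (hfd1 : fd1 ≠ 0)
    (hf : f = C fd * X ^ d + C fd1 * X ^ (d - 1) + C f0) :
    ∀ m n : ℕ, 1 ≤ m → 1 ≤ n →
      _root_.resultant (polyIter f m * polyIter f n) (derivative f) =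
        (-1 : ℚ) ^ ((d - 1) * (d ^ m + d ^ n)) * ((d : ℚ) * fd) ^ (d ^ m + d ^ n) *
          ((polyIter f m).eval 0 * (polyIter f n).eval 0) ^ (d - 2) *
          (polyIter f m).eval (-(((d : ℚ) - 1) * fd1) / ((d : ℚ) * fd)) *
          (polyIter f n).eval (-(((d : ℚ) - 1) * fd1) / ((d : ℚ) * fd)) :=
  resultant_product_iterates_general f d fd fd1 f0 hd hfd hf
end

section
/- Let a, c be nonzero integers, d ≥ 2 an integer, and f(X) = aX^d - acX^{d-1} + c ∈ ℤ[X]. Suppose there is a prime p with p ∤ a, p | c and p² ∤ c. Then f is dynamically irreducible over ℚ, i.e. every iterate f^(n), n ≥ 1, is irreducible in ℚ[X]. -/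
open Polynomial

/-- A polynomial is dynamically irreducible if all its iterates `f^(n)`, `n ≥ 1`,
are irreducible. -/
def DynIrred {R : Type*} [CommSemiring R] (f : R[X]) : Prop :=
  ∀ n : ℕ, 1 ≤ n → Irreducible (polyIter f n)

theorem polyIter_map {R S : Type*} [CommSemiring R] [CommSemiring S] (φ : R →+* S)
    (f : R[X]) (n : ℕ) : polyIter (f.map φ) n = (polyIter f n).map φ := by
  induction n with
  | zero => simp [polyIter]
  | succ n ih => simp [polyIter, ih, Polynomial.map_comp]

theorem natDegree_polyIter_le {R : Type*} [CommSemiring R] (f : R[X]) (n : ℕ) :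
    (polyIter f n).natDegree ≤ f.natDegree ^ n := by
  induction n with
  | zero => simpa [polyIter] using natDegree_X_le
  | succ n ih =>
    calc (f.comp (polyIter f n)).natDegree ≤ f.natDegree * (polyIter f n).natDegree :=
          natDegree_comp_le
      _ ≤ f.natDegree * f.natDegree ^ n := Nat.mul_le_mul_left _ ih
      _ = f.natDegree ^ (n + 1) := (pow_succ' _ _).symm

theorem eval_zero_polyIter_succ {R : Type*} [CommSemiring R] {f : R[X]}
    (hfix : f.eval (f.eval 0) = f.eval 0) (n : ℕ) :
    (polyIter f (n + 1)).eval 0 = f.eval 0 := by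
  induction n with
  | zero => simp [polyIter]
  | succ n ih => rw [polyIter, eval_comp, ih, hfix]

theorem exists_polyIter_C_mul_X_pow {R : Type*} [CommSemiring R] [NoZeroDivisors R] {b : R}
    (hb : b ≠ 0) (d n : ℕ) : ∃ u ≠ 0, polyIter (C b * X ^ d) n = C u * X ^ (d ^ n) := by
  have : Nontrivial R := ⟨⟨b, 0, hb⟩⟩
  induction n with
  | zero => exact ⟨1, one_ne_zero, by simp [polyIter]⟩
  | succ n ih =>
    obtain ⟨u, hu, hiter⟩ := ih
    refine ⟨b * u ^ d, mul_ne_zero hb (pow_ne_zero _ hu), ?_⟩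
    rw [polyIter, hiter, mul_comp, C_comp, pow_comp, X_comp, mul_pow, ← C_pow, ← pow_mul,
      ← mul_assoc, ← C_mul, pow_succ]

section Eisenstein

variable {R K : Type*} [CommRing R] [IsDomain R] [NormalizedGCDMonoid R]
  [Field K] [Algebra R K] [IsFractionRing R K]

theorem irreducible_map_fraction_of_eisenstein {g : R[X]} {P : Ideal R} (hP : P.IsPrime)
    (hlc : g.leadingCoeff ∉ P) (hcoeff : ∀ m < g.natDegree, g.coeff m ∈ P)
    (hdeg : 0 < g.natDegree) (h0 : g.coeff 0 ∉ P ^ 2) :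
    Irreducible (g.map (algebraMap R K)) := by
  set h := g.primPart
  have hg : g = C g.content * h := g.eq_C_content_mul_primPart
  have hgcoeff (m : ℕ) : g.coeff m = g.content * h.coeff m := by
    conv_lhs => rw [hg]
    exact coeff_C_mul _
  have hcontent : g.content ∉ P := fun hc =>
    hlc (P.mem_of_dvd (g.content_dvd_coeff _) hc)
  have hhdeg : h.natDegree = g.natDegree := natDegree_primPart g
  have hirr : Irreducible h := by
    refine irreducible_of_eisenstein_criterion hP ?_ ?_ ?_ ?_ g.isPrimitive_primPart
    · intro hmem
      apply hlc
      rw [leadingCoeff, hgcoeff, ← hhdeg]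
      exact P.mul_mem_left _ hmem
    · intro m hm
      rw [degree_eq_natDegree g.primPart_ne_zero, Nat.cast_lt, hhdeg] at hm
      have := hcoeff m hm
      rw [hgcoeff] at this
      exact (hP.mem_or_mem this).resolve_left hcontent
    · rw [degree_eq_natDegree g.primPart_ne_zero, hhdeg]
      exact_mod_cast hdeg
    · intro hmem
      apply h0
      rw [hgcoeff]
      exact Ideal.mul_mem_left _ _ hmem
  have hunit : IsUnit (C (algebraMap R K g.content)) := by
    refine isUnit_C.2 (isUnit_iff_ne_zero.2 ?_)
    rw [Ne, IsFractionRing.to_map_eq_zero_iff, content_eq_zero_iff]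
    rintro rfl
    simp at hdeg
  rw [hg, Polynomial.map_mul, map_C, irreducible_isUnit_mul hunit]
  exact (g.isPrimitive_primPart.irreducible_iff_irreducible_map_fraction_map).1 hirr

theorem irreducible_map_fraction_of_map_eq_C_mul_X_pow {S : Type*} [CommRing S] [IsDomain S]
    (φ : R →+* S) {g : R[X]} {N : ℕ} {u : S} (hu : u ≠ 0) (hN : 0 < N)
    (hdeg : g.natDegree ≤ N) (hred : g.map φ = C u * X ^ N)
    (h0 : g.coeff 0 ∉ RingHom.ker φ ^ 2) :
    Irreducible (g.map (algebraMap R K)) := by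
  have hcoeff (m : ℕ) : φ (g.coeff m) = if m = N then u else 0 := by
    rw [← coeff_map, hred, coeff_C_mul_X_pow]
  have hN' : g.natDegree = N := by
    refine le_antisymm hdeg (le_natDegree_of_ne_zero fun h => hu ?_)
    simpa [h] using (hcoeff N).symm
  refine irreducible_map_fraction_of_eisenstein (RingHom.ker_isPrime φ) ?_ ?_ (hN' ▸ hN) h0
  · rw [RingHom.mem_ker, leadingCoeff, hcoeff, if_pos hN']
    exact hu
  · intro m hm
    rw [RingHom.mem_ker, hcoeff, if_neg (by omega)]

end Eisenstein

section Family

variable {R : Type*} [CommRing R] (a c : R) {d : ℕ}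

theorem eval_zero_family (hd : 2 ≤ d) :
    (C a * X ^ d - C (a * c) * X ^ (d - 1) + C c).eval 0 = c := by
  simp [zero_pow (by omega : d ≠ 0), zero_pow (by omega : d - 1 ≠ 0)]

theorem eval_self_family (hd : 1 ≤ d) :
    (C a * X ^ d - C (a * c) * X ^ (d - 1) + C c).eval c = c := by
  simp only [eval_add, eval_sub, eval_mul, eval_C, eval_pow, eval_X]
  rw [show c ^ d = c * c ^ (d - 1) by rw [← pow_succ', Nat.sub_add_cancel hd]]
  ring

end Family

theorem eisenstein_family_dynIrred_general (a c : ℤ)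
    (d : ℕ) (hd : 2 ≤ d)
    (f : ℤ[X]) (hf : f = C a * X ^ d - C (a * c) * X ^ (d - 1) + C c)
    (p : ℕ) (hp : p.Prime)
    (hpa : ¬ (p : ℤ) ∣ a) (hpc : (p : ℤ) ∣ c) (hp2c : ¬ (p : ℤ) ^ 2 ∣ c) :
    DynIrred (f.map (Int.castRingHom ℚ)) := by
  have : Fact p.Prime := ⟨hp⟩
  have hf0 : f.eval 0 = c := hf ▸ eval_zero_family a c hd
  have hfix : f.eval (f.eval 0) = f.eval 0 := by
    rw [hf0, hf, eval_self_family a c (by omega)]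
  have hred : f.map (Int.castRingHom (ZMod p)) = C (a : ZMod p) * X ^ d := by
    have hc0 : Int.castRingHom (ZMod p) c = 0 := (ZMod.intCast_zmod_eq_zero_iff_dvd c p).2 hpc
    simp only [hf, Polynomial.map_add, Polynomial.map_sub, Polynomial.map_mul, Polynomial.map_pow,
      map_C, map_X, map_mul, hc0, mul_zero, C_0, zero_mul, sub_zero, add_zero]
    rfl
  have ha0 : (a : ZMod p) ≠ 0 := mt (ZMod.intCast_zmod_eq_zero_iff_dvd a p).1 hpa
  have hdeg : f.natDegree ≤ d := by rw [hf]; compute_degree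
  intro n hn
  obtain ⟨u, hu, hiter⟩ := exists_polyIter_C_mul_X_pow ha0 d n
  rw [polyIter_map, ← algebraMap_int_eq]
  refine irreducible_map_fraction_of_map_eq_C_mul_X_pow (Int.castRingHom (ZMod p)) hu
    (Nat.pow_pos (by omega)) ((natDegree_polyIter_le f n).trans (Nat.pow_le_pow_left hdeg n))
    (by rw [← polyIter_map, hred, hiter]) ?_
  obtain ⟨n, rfl⟩ : ∃ m, n = m + 1 := ⟨n - 1, by omega⟩
  rwa [ZMod.ker_intCastRingHom, Ideal.span_singleton_pow, Ideal.mem_span_singleton,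
    coeff_zero_eq_eval_zero, eval_zero_polyIter_succ hfix, hf0]

/-- Eisenstein-type criterion: `f(X) = aX^d - acX^{d-1} + c` with `p ∤ a`, `p ∣ c`,
`p² ∤ c` is dynamically irreducible over `ℚ`. -/
theorem eisenstein_family_dynIrred (a c : ℤ) (ha : a ≠ 0) (hc : c ≠ 0)
    (d : ℕ) (hd : 2 ≤ d)
    (f : ℤ[X]) (hf : f = C a * X ^ d - C (a * c) * X ^ (d - 1) + C c)
    (p : ℕ) (hp : p.Prime)
    (hpa : ¬ (p : ℤ) ∣ a) (hpc : (p : ℤ) ∣ c) (hp2c : ¬ (p : ℤ) ^ 2 ∣ c) :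
    DynIrred (f.map (Int.castRingHom ℚ)) :=
  eisenstein_family_dynIrred_general a c d hd f hf p hp hpa hpc hp2c
end
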